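/- Let Z be the symmetric 3×3 real matrix with entries Z₁₁ = −|α₁₂−α₂₃|²/2, Z₂₂ = −|α₁₂+α₂₃|²/2, Z₃₃ = −|α₁₃|², Z₁₂ = Im(conj(α₁₂)α₂₃), Z₁₃ = (1/√2)·Re(α₁₂·conj(α₁₃) − α₁₃·conj(α₂₃)), Z₂₃ = (1/√2)·Im(α₁₃·(conj(α₁₂)+conj(α₂₃))), where |α₁₂|²+|α₁₃|²+|α₂₃|² = 1. Then det(Z) = 0 and the nonzero eigenvalues of Z have absolute values (1/2)·|1 ± |α₁₃² − 2α₁₂α₂₃||; in particular the sum of squares of the two largest singular values of Z equals (1 + |α₁₃² − 2α₁₂α₂₃|²)/2. -/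

import Mathlib

/-- The spin-1 correlation matrix of the antisymmetric pure two-qutrit state
with coefficients `a12, a13, a23`. -/
noncomputable def Zmat (a12 a13 a23 : ℂ) : Matrix (Fin 3) (Fin 3) ℝ :=
  !![-(‖a12 - a23‖) ^ 2 / 2,
       Complex.im ((starRingEnd ℂ) a12 * a23),
       (Real.sqrt 2)⁻¹ * Complex.re (a12 * (starRingEnd ℂ) a13 - a13 * (starRingEnd ℂ) a23);
     Complex.im ((starRingEnd ℂ) a12 * a23),
       -(‖a12 + a23‖) ^ 2 / 2,
       (Real.sqrt 2)⁻¹ * Complex.im (a13 * ((starRingEnd ℂ) a12 + (starRingEnd ℂ) a23));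
     (Real.sqrt 2)⁻¹ * Complex.re (a12 * (starRingEnd ℂ) a13 - a13 * (starRingEnd ℂ) a23),
       (Real.sqrt 2)⁻¹ * Complex.im (a13 * ((starRingEnd ℂ) a12 + (starRingEnd ℂ) a23)),
       -(‖a13‖) ^ 2]

/-! Writing `w = x + i y` for the vector
`w = ((α₁₂ - α₂₃)/√2, i(α₁₂ + α₂₃)/√2, -α₁₃)`, one has `Z = -(x xᵀ + y yᵀ) = -Re (w w*)`.
Such a matrix has rank at most two, trace `-‖w‖² = -1`, and the sum of its principal
`2 × 2` minors is `‖x‖²‖y‖² - (x ⬝ y)² = (‖w‖⁴ - |w ⬝ w|²)/4`, where `w ⬝ w = α₁₃² - 2α₁₂α₂₃`.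
So the characteristic polynomial is `X (X² + X + (1 - |w ⬝ w|²)/4)`. -/

section

open Polynomial Matrix

theorem Matrix.charpoly_fin_three {R : Type*} [CommRing R] (M : Matrix (Fin 3) (Fin 3) R) :
    M.charpoly = X ^ 3 - C M.trace * X ^ 2 +
      C (M 0 0 * M 1 1 - M 0 1 * M 1 0 + M 0 0 * M 2 2 - M 0 2 * M 2 0 +
        M 1 1 * M 2 2 - M 1 2 * M 2 1) * X - C M.det := by
  simp only [charpoly, det_fin_three, trace_fin_three, charmatrix_apply_eq, ne_eq, Fin.reduceEq,
    not_false_eq_true, charmatrix_apply_ne, map_add, map_sub, map_mul]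
  ring

theorem det_neg_re_vecMulVec_star (w : Fin 3 → ℂ) :
    (-(vecMulVec w (star w)).map Complex.re).det = 0 := by
  simp only [det_fin_three, Matrix.neg_apply, Matrix.map_apply, vecMulVec_apply, Pi.star_apply,
    RCLike.star_def, Complex.mul_re, Complex.conj_re, Complex.conj_im]
  ring

theorem charpoly_neg_re_vecMulVec_star (w : Fin 3 → ℂ) :
    (-(vecMulVec w (star w)).map Complex.re).charpoly =
      X ^ 3 + C (∑ i, ‖w i‖ ^ 2) * X ^ 2 +
        C (((∑ i, ‖w i‖ ^ 2) ^ 2 - ‖w ⬝ᵥ w‖ ^ 2) / 4) * X := by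
  have htrace : (-(vecMulVec w (star w)).map Complex.re).trace = -∑ i, ‖w i‖ ^ 2 := by
    simp [trace_fin_three, Fin.sum_univ_three, vecMulVec_apply, Complex.mul_re, Complex.sq_norm,
      Complex.normSq_apply]
  rw [charpoly_fin_three, det_neg_re_vecMulVec_star, htrace, map_neg, map_zero, sub_zero, neg_mul,
    sub_neg_eq_add]
  congr 3
  simp only [Matrix.neg_apply, Matrix.map_apply, vecMulVec_apply, Pi.star_apply, RCLike.star_def,
    Complex.mul_re, Complex.mul_im, Complex.conj_re, Complex.conj_im, Complex.add_re, Complex.add_im,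
    Complex.sq_norm, Complex.normSq_apply, Fin.sum_univ_three, dotProduct]
  ring

noncomputable def antisymVector (a12 a13 a23 : ℂ) : Fin 3 → ℂ :=
  ![(√2)⁻¹ * (a12 - a23), (√2)⁻¹ * (Complex.I * (a12 + a23)), -a13]

theorem Zmat_eq_neg_re_vecMulVec_star (a12 a13 a23 : ℂ) :
    Zmat a12 a13 a23 =
      -(vecMulVec (antisymVector a12 a13 a23) (star (antisymVector a12 a13 a23))).map Complex.re := by
  ext i j
  simp only [Matrix.neg_apply, Matrix.map_apply, vecMulVec_apply]
  fin_cases i <;> fin_cases j <;>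
    simp [Zmat, antisymVector, Complex.sq_norm, Complex.normSq_apply, Complex.mul_re,
      Complex.mul_im] <;>
    grind

theorem sum_norm_sq_antisymVector (a12 a13 a23 : ℂ) :
    ∑ i, ‖antisymVector a12 a13 a23 i‖ ^ 2 = ‖a12‖ ^ 2 + ‖a13‖ ^ 2 + ‖a23‖ ^ 2 := by
  simp only [antisymVector, Fin.sum_univ_three, cons_val_zero, cons_val_one, cons_val, norm_neg,
    Complex.norm_mul, norm_inv, Complex.norm_real, Real.norm_eq_abs, Complex.norm_I, one_mul,
    mul_pow, inv_pow, sq_abs, Nat.ofNat_nonneg, Real.sq_sqrt]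
  linear_combination parallelogram_law_with_norm ℝ a12 a23 / 2

theorem antisymVector_dotProduct_self (a12 a13 a23 : ℂ) :
    antisymVector a12 a13 a23 ⬝ᵥ antisymVector a12 a13 a23 = a13 ^ 2 - 2 * a12 * a23 := by
  have hs : (√2 : ℂ)⁻¹ ^ 2 = 2⁻¹ := by
    rw [inv_pow, ← Complex.ofReal_pow, Real.sq_sqrt zero_le_two]; norm_num
  simp only [dotProduct, antisymVector, Complex.ofReal_inv, Fin.sum_univ_three, cons_val_zero,
    cons_val_one, cons_val]
  linear_combination (-4 * a12 * a23) * hs + ((√2 : ℂ)⁻¹ ^ 2 * (a12 + a23) ^ 2) * Complex.I_sq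

end

open Polynomial in
theorem asym_correlation_matrix_spectrum (a12 a13 a23 : ℂ)
    (h : ‖a12‖ ^ 2 + ‖a13‖ ^ 2 + ‖a23‖ ^ 2 = 1) :
    (Zmat a12 a13 a23).det = 0 ∧
    (Zmat a12 a13 a23).charpoly =
      X * (X + C ((1 + ‖a13 ^ 2 - 2 * a12 * a23‖) / 2)) *
        (X + C ((1 - ‖a13 ^ 2 - 2 * a12 * a23‖) / 2)) ∧
    ((1 + ‖a13 ^ 2 - 2 * a12 * a23‖) / 2) ^ 2 +
        ((1 - ‖a13 ^ 2 - 2 * a12 * a23‖) / 2) ^ 2 =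
      (1 + ‖a13 ^ 2 - 2 * a12 * a23‖ ^ 2) / 2 := by
  have hZ := Zmat_eq_neg_re_vecMulVec_star a12 a13 a23
  refine ⟨hZ ▸ det_neg_re_vecMulVec_star _, ?_, by ring⟩
  rw [hZ, charpoly_neg_re_vecMulVec_star, sum_norm_sq_antisymVector, antisymVector_dotProduct_self,
    h]
  set r := ‖a13 ^ 2 - 2 * a12 * a23‖
  have hsum : (C 1 : ℝ[X]) = C ((1 + r) / 2) + C ((1 - r) / 2) := by rw [← C_add]; ring_nf
  have hprod : C ((1 ^ 2 - r ^ 2) / 4) = C ((1 + r) / 2) * C ((1 - r) / 2) := by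
    rw [← C_mul]; ring_nf
  rw [hsum, hprod]
  ring
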